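/- Let G ⊆ Diff(ℂ,0) be a finitely generated L-stable subgroup. Then every finitely generated subgroup of G all of whose elements are resonant is finite. -/

import Mathlib

open Filter Topology

noncomputable section

/-- The pseudo-orbit of `p` under a set `S` of maps: all points obtained from `p`
by successively applying elements of `S`. -/
inductive PseudoOrbit (S : Set (ℂ → ℂ)) (p : ℂ) : ℂ → Prop
  | base : PseudoOrbit S p p
  | step {q : ℂ} {f : ℂ → ℂ} : PseudoOrbit S p q → f ∈ S → PseudoOrbit S p (f q)

/-- A set of germs is `L`-stable if every neighborhood `U` of `0` contains a
sub-neighborhood `V` all of whose pseudo-orbits stay in `U`. -/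
def LStableSet (S : Set (ℂ → ℂ)) : Prop :=
  ∀ U ∈ 𝓝 (0:ℂ), ∃ V ∈ 𝓝 (0:ℂ), V ⊆ U ∧ ∀ p ∈ V, ∀ q : ℂ, PseudoOrbit S p q → q ∈ U

/-- A set is closed off the origin if it is closed in some punctured neighborhood of `0`. -/
def ClosedOffOrigin (S : Set ℂ) : Prop :=
  ∃ W ∈ 𝓝 (0:ℂ), closure S ∩ (W \ {0}) ⊆ S

/-- A germ is analytically linearizable if some local biholomorphism fixing `0`
conjugates it to its linear part `z ↦ f'(0)·z`. -/
def Linearizable (f : ℂ → ℂ) : Prop :=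
  ∃ h : ℂ → ℂ, AnalyticAt ℂ h 0 ∧ h 0 = 0 ∧ deriv h 0 ≠ 0 ∧
    ∀ᶠ z in 𝓝 (0:ℂ), h (f z) = deriv f 0 * h z

/-- A germ is non-resonant if its multiplier is `e^{2πiλ}` with `λ` irrational. -/
def NonResonant (f : ℂ → ℂ) : Prop :=
  ∃ l : ℝ, Irrational l ∧ deriv f 0 = Complex.exp (2 * (Real.pi : ℂ) * Complex.I * (l : ℂ))

/-- A set of germs is finite up to germ equality. -/
def GermFinite (S : Set (ℂ → ℂ)) : Prop :=
  ∃ F : Set (ℂ → ℂ), F.Finite ∧ ∀ f ∈ S, ∃ g ∈ F, f =ᶠ[𝓝 (0:ℂ)] g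

/-- A set of germs is cyclic (up to germ equality) if it consists of the iterates of
a single element. -/
def GermCyclic (S : Set (ℂ → ℂ)) : Prop :=
  ∃ g ∈ S, ∀ f ∈ S, ∃ n : ℕ, f =ᶠ[𝓝 (0:ℂ)] g^[n]

/-- A (model of a) subgroup of `Diff(ℂ,0)`: a set of holomorphic germs fixing `0`,
invertible at `0`, closed under composition and germ-inversion. -/
structure GermGroup where
  carrier : Set (ℂ → ℂ)
  analytic : ∀ f ∈ carrier, AnalyticAt ℂ f 0
  fixes_zero : ∀ f ∈ carrier, f 0 = 0
  deriv_ne : ∀ f ∈ carrier, deriv f 0 ≠ 0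
  id_mem : id ∈ carrier
  comp_mem : ∀ f ∈ carrier, ∀ g ∈ carrier, f ∘ g ∈ carrier
  inv_mem : ∀ f ∈ carrier, ∃ g ∈ carrier,
    (∀ᶠ z in 𝓝 (0:ℂ), g (f z) = z) ∧ (∀ᶠ z in 𝓝 (0:ℂ), f (g z) = z)

/-- A germ group is finitely generated if finitely many of its elements generate every
element (as a germ) by composition. -/
def GermGroup.FinitelyGenerated (G : GermGroup) : Prop :=
  ∃ T : Set (ℂ → ℂ), T.Finite ∧ T ⊆ G.carrier ∧
    ∀ f ∈ G.carrier, ∃ l : List (ℂ → ℂ), (∀ g ∈ l, g ∈ T) ∧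
      f =ᶠ[𝓝 (0:ℂ)] l.foldr (· ∘ ·) id

/-!
Two elements of `G` with the same multiplier differ by an element `f` tangent to the identity,
and `L`-stability makes the fixed point `0` of `f` Lyapunov stable. If `f` were not the identity,
then `f z = z + zᵏ g z` with `k ≥ 2` and `g 0 ≠ 0`, so `f^[m] z = z + zᵏ gₘ z` with
`gₘ 0 = m g 0`; the maximum principle on a small circle, where all orbits stay bounded, bounds
`m ‖g 0‖` uniformly in `m`. Hence the multiplier is injective on germs of `G`. On `H` it takes
values among the `N`-th roots of unity, `N` a common order of the multipliers of the finitely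
many generators, so `H` is finite.
-/

open Metric

def IsLyapunovStable {X : Type*} [TopologicalSpace X] (f : X → X) (x : X) : Prop :=
  ∀ U ∈ 𝓝 x, ∀ᶠ z in 𝓝 x, ∀ m : ℕ, f^[m] z ∈ U

lemma PseudoOrbit.iterate {S : Set (ℂ → ℂ)} {f : ℂ → ℂ} (hf : f ∈ S) (p : ℂ) (m : ℕ) :
    PseudoOrbit S p (f^[m] p) := by
  induction m with
  | zero => exact .base
  | succ n ih => rw [Function.iterate_succ_apply']; exact ih.step hf

lemma LStableSet.isLyapunovStable {S : Set (ℂ → ℂ)} (hS : LStableSet S) {f : ℂ → ℂ}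
    (hf : f ∈ S) : IsLyapunovStable f 0 := by
  intro U hU
  obtain ⟨V, hV, -, horb⟩ := hS U hU
  filter_upwards [hV] with z hz m using horb z hz _ (PseudoOrbit.iterate hf z m)

lemma differentiableAt_iterate_of_forall_iterate_mem {𝕜 : Type*} [NontriviallyNormedField 𝕜]
    {f : 𝕜 → 𝕜} {U : Set 𝕜} (hf : ∀ w ∈ U, DifferentiableAt 𝕜 f w) {z : 𝕜}
    (hz : ∀ n, f^[n] z ∈ U) (m : ℕ) : DifferentiableAt 𝕜 f^[m] z := by
  induction m with
  | zero => exact differentiableAt_id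
  | succ n ih =>
    rw [Function.iterate_succ']
    exact (hf _ (hz n)).comp z ih

lemma AnalyticAt.exists_eventuallyEq_add_pow_mul {f : ℂ → ℂ} (hf : AnalyticAt ℂ f 0)
    (hf0 : f 0 = 0) (hf' : deriv f 0 = 1) (hid : ¬ f =ᶠ[𝓝 0] id) :
    ∃ k, 2 ≤ k ∧ ∃ g : ℂ → ℂ, AnalyticAt ℂ g 0 ∧ g 0 ≠ 0 ∧
      ∀ᶠ z in 𝓝 0, f z = z + z ^ k * g z := by
  have hφ : AnalyticAt ℂ (fun z => f z - z) 0 := hf.sub analyticAt_id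
  have hle : ((2 : ℕ) : ℕ∞) ≤ analyticOrderAt (fun z => f z - z) 0 := by
    rw [natCast_le_analyticOrderAt_iff_iteratedDeriv_eq_zero hφ]
    intro i hi
    interval_cases i
    · simp [hf0]
    · simp [deriv_fun_sub hf.differentiableAt differentiableAt_fun_id, hf']
  have hne : analyticOrderAt (fun z => f z - z) 0 ≠ ⊤ := by
    rw [Ne, analyticOrderAt_eq_top]
    exact fun h => hid (h.mono fun z hz => sub_eq_zero.mp hz)
  obtain ⟨k, hk⟩ := WithTop.ne_top_iff_exists.mp hne
  obtain ⟨g, hg, hg0, hfg⟩ := hφ.analyticOrderAt_eq_natCast.mp hk.symm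
  rw [← hk] at hle
  refine ⟨k, ENat.natCast_le_natCast.mp hle, g, hg, hg0, ?_⟩
  filter_upwards [hfg] with z hz
  simp only [sub_zero, smul_eq_mul] at hz
  rw [← hz]
  ring

lemma exists_iterate_eventuallyEq_add_pow_mul {f g : ℂ → ℂ} {k : ℕ} (hk : 2 ≤ k)
    (hg : AnalyticAt ℂ g 0) (hfg : ∀ᶠ z in 𝓝 0, f z = z + z ^ k * g z) (m : ℕ) :
    ∃ gm : ℂ → ℂ, AnalyticAt ℂ gm 0 ∧ gm 0 = m * g 0 ∧
      ∀ᶠ z in 𝓝 0, f^[m] z = z + z ^ k * gm z := by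
  induction m with
  | zero => exact ⟨0, analyticAt_const, by simp, by simp⟩
  | succ m ih =>
    obtain ⟨gm, hgm, hgm0, hfm⟩ := ih
    -- `f^[m] z = z * u z` with `u 0 = 1`, so
    -- `f^[m+1] z - f^[m] z = z ^ k * (u z ^ k * g (z * u z))`.
    set u : ℂ → ℂ := fun z => 1 + z ^ (k - 1) * gm z
    have hu : AnalyticAt ℂ u 0 := analyticAt_const.add ((analyticAt_id.pow _).mul hgm)
    have hu0 : u 0 = 1 := by simp [u, zero_pow (show k - 1 ≠ 0 by omega)]
    have hmul : ∀ z : ℂ, z + z ^ k * gm z = z * u z := fun z => by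
      obtain ⟨j, rfl⟩ := Nat.exists_eq_add_of_le' (show 1 ≤ k by omega)
      simp only [u, Nat.add_sub_cancel]
      ring
    have hzu : AnalyticAt ℂ (fun z => z * u z) 0 := analyticAt_id.mul hu
    have htends : Tendsto (fun z => z * u z) (𝓝 0) (𝓝 0) := by
      simpa using hzu.continuousAt.tendsto
    have hgu : AnalyticAt ℂ (fun z => g (z * u z)) 0 :=
      hg.comp_of_eq hzu (by simp)
    refine ⟨fun z => gm z + u z ^ k * g (z * u z), hgm.add ((hu.pow k).mul hgu), ?_, ?_⟩
    · simp only [hgm0, hu0, one_pow, mul_one, one_mul, Nat.cast_add, Nat.cast_one]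
      ring
    · filter_upwards [hfm, htends.eventually hfg] with z hz hfz
      rw [Function.iterate_succ_apply', hz, hmul, hfz, mul_pow, ← hmul]
      ring

lemma norm_le_div_pow_of_eventuallyEq_pow_mul {h G : ℂ → ℂ} {k : ℕ} {s M : ℝ} (hs : 0 < s)
    (hh : DifferentiableOn ℂ h (closedBall 0 s)) (hG : DifferentiableAt ℂ G 0)
    (hhG : ∀ᶠ z in 𝓝 0, h z = z ^ k * G z) (hM : ∀ z ∈ sphere (0 : ℂ) s, ‖h z‖ ≤ M) :
    ‖G 0‖ ≤ M / s ^ k := by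
  set Q : ℂ → ℂ := Function.update (fun z => h z / z ^ k) 0 (G 0)
  have hQ_off : ∀ z ≠ 0, Q z = h z / z ^ k := fun z hz => Function.update_of_ne hz _ _
  have hQG : Q =ᶠ[𝓝 0] G := by
    filter_upwards [hhG] with z hz
    rcases eq_or_ne z 0 with rfl | hz0
    · simp [Q]
    · rw [hQ_off z hz0, hz, mul_div_cancel_left₀ _ (pow_ne_zero k hz0)]
  have hQ : DiffContOnCl ℂ Q (ball 0 s) := by
    refine DifferentiableOn.diffContOnCl ?_
    rw [closure_ball _ hs.ne']
    intro z hz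
    rcases eq_or_ne z 0 with rfl | hz0
    · exact (hQG.differentiableAt_iff.mpr hG).differentiableWithinAt
    · have hQz : Q =ᶠ[𝓝 z] fun w => h w / w ^ k := by
        filter_upwards [isOpen_ne.mem_nhds hz0] with w hw using hQ_off w hw
      exact ((hh z hz).div (differentiableAt_pow k).differentiableWithinAt
        (pow_ne_zero k hz0)).congr_of_eventuallyEq (nhdsWithin_le_nhds hQz) hQz.self_of_nhds
  have hfrontier : ∀ z ∈ frontier (ball (0 : ℂ) s), ‖Q z‖ ≤ M / s ^ k := by
    intro z hz
    rw [frontier_ball _ hs.ne'] at hz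
    have hzs : ‖z‖ = s := by simpa using hz
    have hz0 : z ≠ 0 := by rintro rfl; simp [hs.ne] at hzs
    rw [hQ_off z hz0, norm_div, norm_pow, hzs]
    gcongr
    exact hM z hz
  have h0 : (0 : ℂ) ∈ closure (ball 0 s) := subset_closure (mem_ball_self hs)
  simpa [Q] using Complex.norm_le_of_forall_mem_frontier_norm_le isBounded_ball hQ hfrontier h0

theorem IsLyapunovStable.eventuallyEq_id {f : ℂ → ℂ} (hstab : IsLyapunovStable f 0)
    (hf : AnalyticAt ℂ f 0) (hf0 : f 0 = 0) (hf' : deriv f 0 = 1) : f =ᶠ[𝓝 0] id := by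
  by_contra hid
  obtain ⟨k, hk, g, hg, hg0, hfg⟩ := hf.exists_eventuallyEq_add_pow_mul hf0 hf' hid
  set U := {w | DifferentiableAt ℂ f w} ∩ closedBall 0 1
  have hU : U ∈ 𝓝 0 := inter_mem (hf.eventually_analyticAt.mono fun w hw => hw.differentiableAt)
    (closedBall_mem_nhds _ one_pos)
  obtain ⟨ε, hε, hstable⟩ := eventually_nhds_iff_ball.mp (hstab U hU)
  set s := ε / 2
  have hs : 0 < s := half_pos hε
  have horbit : ∀ z ∈ closedBall (0 : ℂ) s, ∀ n, f^[n] z ∈ U := fun z hz =>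
    hstable z (closedBall_subset_ball (half_lt_self hε) hz)
  have hbound : ∀ m : ℕ, m * ‖g 0‖ ≤ (1 + s) / s ^ k := by
    intro m
    obtain ⟨gm, hgm, hgm0, hfm⟩ := exists_iterate_eventuallyEq_add_pow_mul hk hg hfg m
    have hdiff : DifferentiableOn ℂ (fun z => f^[m] z - z) (closedBall 0 s) := fun z hz =>
      ((differentiableAt_iterate_of_forall_iterate_mem (fun w hw => hw.1) (horbit z hz) m).sub
        differentiableAt_id).differentiableWithinAt
    have hnorm : ∀ z ∈ sphere (0 : ℂ) s, ‖f^[m] z - z‖ ≤ 1 + s := fun z hz => by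
      have hzs : ‖z‖ = s := by simpa using hz
      have hfmz : ‖f^[m] z‖ ≤ 1 := by
        simpa using (horbit z (sphere_subset_closedBall hz) m).2
      linarith [norm_sub_le (f^[m] z) z]
    have hrem : ∀ᶠ z in 𝓝 0, f^[m] z - z = z ^ k * gm z := by
      filter_upwards [hfm] with z hz
      rw [hz, add_sub_cancel_left]
    simpa [hgm0] using
      norm_le_div_pow_of_eventuallyEq_pow_mul hs hdiff hgm.differentiableAt hrem hnorm
  obtain ⟨m, hm⟩ := exists_nat_gt ((1 + s) / s ^ k / ‖g 0‖)
  rw [div_lt_iff₀ (norm_pos_iff.mpr hg0)] at hm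
  linarith [hbound m]

lemma List.foldr_comp_apply_of_forall_apply_eq {α : Type*} {l : List (α → α)} {x : α}
    (h : ∀ t ∈ l, t x = x) : l.foldr (· ∘ ·) id x = x := by
  induction l with
  | nil => rfl
  | cons t l ih =>
    simp only [List.foldr_cons, Function.comp_apply]
    rw [ih fun s hs => h s (List.mem_cons_of_mem t hs), h t List.mem_cons_self]

lemma List.hasDerivAt_foldr_comp {𝕜 : Type*} [NontriviallyNormedField 𝕜] {l : List (𝕜 → 𝕜)}
    {x : 𝕜} (h : ∀ t ∈ l, t x = x ∧ DifferentiableAt 𝕜 t x) :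
    HasDerivAt (l.foldr (· ∘ ·) id) (l.map (deriv · x)).prod x := by
  induction l with
  | nil => exact hasDerivAt_id x
  | cons t l ih =>
    have hl : ∀ s ∈ l, s x = x ∧ DifferentiableAt 𝕜 s x :=
      fun s hs => h s (List.mem_cons_of_mem t hs)
    obtain ⟨-, ht⟩ := h t List.mem_cons_self
    have ht' : HasDerivAt t (deriv t x) (l.foldr (· ∘ ·) id x) := by
      rw [List.foldr_comp_apply_of_forall_apply_eq fun s hs => (hl s hs).1]
      exact ht.hasDerivAt
    exact ht'.comp x (ih hl)

lemma Set.Finite.exists_pos_forall_pow_eq_one {ι M : Type*} [Monoid M] {s : Set ι}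
    (hs : s.Finite) {x : ι → M} (hx : ∀ i ∈ s, IsOfFinOrder (x i)) :
    ∃ N, 0 < N ∧ ∀ i ∈ s, x i ^ N = 1 := by
  refine ⟨∏ i ∈ hs.toFinset, orderOf (x i),
    Finset.prod_pos fun i hi => (hx i (hs.mem_toFinset.mp hi)).orderOf_pos, fun i hi => ?_⟩
  exact orderOf_dvd_iff_pow_eq_one.mp (Finset.dvd_prod_of_mem _ (hs.mem_toFinset.mpr hi))

lemma germFinite_of_finite_image {β : Type*} {S : Set (ℂ → ℂ)} (φ : (ℂ → ℂ) → β)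
    (hφ : (φ '' S).Finite) (hinj : ∀ f ∈ S, ∀ g ∈ S, φ f = φ g → f =ᶠ[𝓝 0] g) :
    GermFinite S := by
  refine ⟨Function.invFunOn φ S '' (φ '' S), hφ.image _, fun f hf => ?_⟩
  have hex : ∃ g ∈ S, φ g = φ f := ⟨f, hf, rfl⟩
  exact ⟨_, Set.mem_image_of_mem _ (Set.mem_image_of_mem φ hf),
    hinj f hf _ (Function.invFunOn_mem hex) (Function.invFunOn_eq hex).symm⟩

namespace GermGroup

variable (G : GermGroup)

lemma tendsto_nhds_zero {f : ℂ → ℂ} (hf : f ∈ G.carrier) : Tendsto f (𝓝 0) (𝓝 0) := by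
  simpa [G.fixes_zero f hf] using (G.analytic f hf).continuousAt.tendsto

lemma deriv_comp {f g : ℂ → ℂ} (hf : f ∈ G.carrier) (hg : g ∈ G.carrier) :
    deriv (f ∘ g) 0 = deriv f 0 * deriv g 0 := by
  have hf' : DifferentiableAt ℂ f (g 0) := by
    rw [G.fixes_zero g hg]
    exact (G.analytic f hf).differentiableAt
  rw [_root_.deriv_comp 0 hf' (G.analytic g hg).differentiableAt, G.fixes_zero g hg]

theorem eventuallyEq_of_deriv_eq (hst : LStableSet G.carrier) {f g : ℂ → ℂ}
    (hf : f ∈ G.carrier) (hg : g ∈ G.carrier) (hfg : deriv f 0 = deriv g 0) :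
    f =ᶠ[𝓝 0] g := by
  obtain ⟨g', hg', hg'g, hgg'⟩ := G.inv_mem g hg
  have hfg' : f ∘ g' ∈ G.carrier := G.comp_mem f hf g' hg'
  have hderiv : deriv (f ∘ g') 0 = 1 := calc
    deriv (f ∘ g') 0 = deriv (g ∘ g') 0 := by rw [G.deriv_comp hf hg', G.deriv_comp hg hg', hfg]
    _ = 1 := by rw [(show g ∘ g' =ᶠ[𝓝 0] id from hgg').deriv_eq, deriv_id]
  have hid : f ∘ g' =ᶠ[𝓝 0] id :=
    (hst.isLyapunovStable hfg').eventuallyEq_id (G.analytic _ hfg') (G.fixes_zero _ hfg') hderiv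
  filter_upwards [G.tendsto_nhds_zero hg |>.eventually hid, hg'g] with z hz hz'
  simpa [hz'] using hz

end GermGroup

theorem resonant_subgroup_finite_general (G : GermGroup)
    (hst : LStableSet G.carrier)
    (H : Set (ℂ → ℂ)) (hHG : H ⊆ G.carrier)
    (hHfg : ∃ T : Set (ℂ → ℂ), T.Finite ∧ T ⊆ H ∧
      ∀ f ∈ H, ∃ l : List (ℂ → ℂ), (∀ g ∈ l, g ∈ T) ∧
        f =ᶠ[𝓝 (0:ℂ)] l.foldr (· ∘ ·) id)
    (hres : ∀ f ∈ H, ∃ n : ℕ, 0 < n ∧ (deriv f 0) ^ n = 1) :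
    GermFinite H := by
  obtain ⟨T, hT, hTH, hgen⟩ := hHfg
  obtain ⟨N, hN, hTN⟩ := hT.exists_pos_forall_pow_eq_one (x := fun t => deriv t 0)
    fun t ht => isOfFinOrder_iff_pow_eq_one.mpr (hres t (hTH ht))
  have hHN : ∀ f ∈ H, deriv f 0 ^ N = 1 := by
    intro f hf
    obtain ⟨l, hlT, hfl⟩ := hgen f hf
    have hl : ∀ t ∈ l, t 0 = 0 ∧ DifferentiableAt ℂ t 0 := fun t ht =>
      have htG := hHG (hTH (hlT t ht))
      ⟨G.fixes_zero t htG, (G.analytic t htG).differentiableAt⟩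
    rw [hfl.deriv_eq, (List.hasDerivAt_foldr_comp hl).deriv]
    refine List.prod_induction (· ^ N = 1) (fun a b ha hb => by rw [mul_pow, ha, hb, one_mul])
      (one_pow N) fun z hz => ?_
    obtain ⟨t, ht, rfl⟩ := List.mem_map.mp hz
    exact hTN t (hlT t ht)
  refine germFinite_of_finite_image (fun f => deriv f 0)
    ((Polynomial.nthRootsFinset N (1 : ℂ)).finite_toSet.subset ?_)
    fun f hf g hg => G.eventuallyEq_of_deriv_eq hst (hHG hf) (hHG hg)
  rintro _ ⟨f, hf, rfl⟩
  exact (Polynomial.mem_nthRootsFinset hN 1).mpr (hHN f hf)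

/-- in a finitely generated `L`-stable subgroup `G ⊆ Diff(ℂ,0)`, every
finitely generated subgroup `H ⊆ G` all of whose elements are resonant is finite. -/
theorem resonant_subgroup_finite (G : GermGroup)
    (hfg : G.FinitelyGenerated) (hst : LStableSet G.carrier)
    (H : Set (ℂ → ℂ)) (hHG : H ⊆ G.carrier)
    (hid : id ∈ H) (hcomp : ∀ f ∈ H, ∀ g ∈ H, f ∘ g ∈ H)
    (hinv : ∀ f ∈ H, ∃ g ∈ H,
      (∀ᶠ z in 𝓝 (0:ℂ), g (f z) = z) ∧ (∀ᶠ z in 𝓝 (0:ℂ), f (g z) = z))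
    (hHfg : ∃ T : Set (ℂ → ℂ), T.Finite ∧ T ⊆ H ∧
      ∀ f ∈ H, ∃ l : List (ℂ → ℂ), (∀ g ∈ l, g ∈ T) ∧
        f =ᶠ[𝓝 (0:ℂ)] l.foldr (· ∘ ·) id)
    (hres : ∀ f ∈ H, ∃ n : ℕ, 0 < n ∧ (deriv f 0) ^ n = 1) :
    GermFinite H :=
  resonant_subgroup_finite_general G hst H hHG hHfg hres
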